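/- Let A be a commutative ring, let n ≥ 1, let a be a function assigning an element a_f ∈ A to each edge f of the complete graph K_{n+1}, and let e_0 be an edge of K_{n+1}. Then Φ_n((c_{e_0})_* a) = Σ_{T ∈ T_{n+1}^{e_0}} ( T_*(a + 1_{e_0}) − T_*(a) ), where T_{n+1}^{e_0} denotes the set of spanning trees of K_{n+1} containing the edge e_0. -/

import Mathlib

/-- The product `T_*(a) = ∏_{f edge of T} a_f` associated to a (spanning sub)graph `T`
of the complete graph on `Fin n` and a function `a` on edges. -/
noncomputable def treeProd {n : ℕ} {A : Type*} [CommRing A]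
    (T : SimpleGraph (Fin n)) (a : Sym2 (Fin n) → A) : A :=
  ∏ᶠ f ∈ T.edgeSet, a f

/-- The `n`-th forested form `Φ_n(a) = Σ_{T spanning tree of K_n} T_*(a)`. -/
noncomputable def forestedForm (n : ℕ) {A : Type*} [CommRing A]
    (a : Sym2 (Fin n) → A) : A :=
  ∑ᶠ (T : SimpleGraph (Fin n)) (_ : T.IsTree), treeProd T a

/-- The pushforward `(c_{e₀})_* a`: the value on an edge `g` of `K_n` is the sum of `a_f`
over the edges `f ≠ e₀` of `K_{n+1}` contracting onto `g`. -/
noncomputable def pushforward {n : ℕ} {A : Type*} [CommRing A]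
    (q : Fin (n + 1) → Fin n) (e₀ : Sym2 (Fin (n + 1)))
    (a : Sym2 (Fin (n + 1)) → A) : Sym2 (Fin n) → A :=
  fun g => ∑ᶠ f ∈ {f : Sym2 (Fin (n + 1)) | ¬ f.IsDiag ∧ f ≠ e₀ ∧ Sym2.map q f = g}, a f

/-- The function `1_{e₀}`, equal to `1` on the edge `e₀` and `0` elsewhere. -/
def edgeIndicator {n : ℕ} {A : Type*} [CommRing A] (e₀ : Sym2 (Fin n)) :
    Sym2 (Fin n) → A :=
  fun f => if f = e₀ then 1 else 0

/-! Expanding the products of sums that define `(c_{e₀})_* a` on the edges of a spanning tree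
of `K_n` turns the left side into a sum over the edge sets `F` of `K_{n+1}` that the contraction
maps bijectively onto the edges of a spanning tree. These are exactly the `F` for which
`F ∪ {e₀}` is a spanning tree of `K_{n+1}`: contracting `e₀` preserves connectivity, and in a tree
containing `e₀` two edges with the same image would close a triangle with `e₀`; conversely, paths
lift through the contraction, and the edge count is right. Finally
`T_*(a + 1_{e₀}) - T_*(a) = ∏_{f ∈ T, f ≠ e₀} a_f` for every tree `T` containing `e₀`. -/

open Finset Function

namespace Finset

variable {α β R : Type*} [CommSemiring R] [DecidableEq α] [DecidableEq β]

theorem prod_sum_fiber_eq_sum_transversal (π : α → β) (E : Finset α) (a : α → R)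
    (G : Finset β) :
    ∏ g ∈ G, ∑ f ∈ E with π f = g, a f =
      ∑ F ∈ E.powerset with #F = #G ∧ F.image π = G, ∏ f ∈ F, a f := by
  induction G using Finset.induction_on with
  | empty =>
    rw [prod_empty, sum_eq_single_of_mem ∅ (by simp) (fun F hF hne => by simp_all), prod_empty]
  | insert g G hg ih =>
    rw [prod_insert hg, ih, sum_mul_sum, ← sum_product']
    have not_mem : ∀ {f} {F : Finset α}, π f = g → F.image π = G → f ∉ F :=
      fun hf hF h => hg (hF ▸ hf ▸ mem_image_of_mem π h)
    refine sum_bij (fun p _ => insert p.1 p.2) ?_ ?_ ?_ ?_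
    · rintro ⟨f, F⟩ hp
      simp only [mem_product, mem_filter, mem_powerset] at hp ⊢
      obtain ⟨⟨hfE, hf⟩, hFE, hcard, hF⟩ := hp
      refine ⟨insert_subset hfE hFE, ?_, by rw [image_insert, hf, hF]⟩
      rw [card_insert_of_notMem (not_mem hf hF), card_insert_of_notMem hg, hcard]
    · rintro ⟨f, F⟩ hp ⟨f', F'⟩ hp' heq
      simp only [mem_product, mem_filter, mem_powerset] at hp hp'
      have hf : f ∉ F := not_mem hp.1.2 hp.2.2.2
      have hf' : f' ∉ F' := not_mem hp'.1.2 hp'.2.2.2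
      have hff' : f = f' := by
        rcases mem_insert.mp (heq ▸ mem_insert_self f F) with h | h
        · exact h
        · exact absurd h (not_mem hp.1.2 hp'.2.2.2)
      subst hff'
      rw [Prod.mk.injEq, ← erase_insert hf, ← erase_insert hf']
      exact ⟨rfl, congrArg (erase · f) heq⟩
    · intro F' hF'
      simp only [mem_filter, mem_powerset] at hF'
      obtain ⟨hFE, hcard, hF⟩ := hF'
      have hinj : Set.InjOn π F' := card_image_iff.mp (by rw [hF, hcard])
      obtain ⟨f, hf, rfl⟩ := mem_image.mp (hF ▸ mem_insert_self g G)
      refine ⟨(f, F'.erase f), ?_, insert_erase hf⟩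
      simp only [mem_product, mem_filter, mem_powerset]
      refine ⟨⟨hFE hf, trivial⟩, (erase_subset f F').trans hFE, ?_, ?_⟩
      · rw [card_erase_of_mem hf, hcard, card_insert_of_notMem hg, Nat.add_sub_cancel]
      · ext y
        simp only [mem_image, mem_erase]
        constructor
        · rintro ⟨x, ⟨hxf, hx⟩, rfl⟩
          have : π x ∈ insert (π f) G := hF ▸ mem_image_of_mem π hx
          exact (mem_insert.mp this).resolve_left fun h => hxf (hinj hx hf h)
        · intro hy
          obtain ⟨x, hx, rfl⟩ := mem_image.mp (hF ▸ mem_insert_of_mem hy)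
          exact ⟨x, ⟨fun h => hg (h ▸ hy), hx⟩, rfl⟩
    · rintro ⟨f, F⟩ hp
      simp only [mem_product, mem_filter, mem_powerset] at hp
      rw [prod_insert (not_mem hp.1.2 hp.2.2.2)]

end Finset

namespace SimpleGraph

variable {V W : Type*}

lemma edgeSet_fromEdgeSet_of_forall_not_isDiag {s : Set (Sym2 V)} (h : ∀ e ∈ s, ¬ e.IsDiag) :
    (fromEdgeSet s).edgeSet = s := by
  rw [edgeSet_fromEdgeSet, sdiff_eq_left, Set.disjoint_left]
  exact h

lemma isTree_fromEdgeSet_iff [Finite V] {s : Finset (Sym2 V)} (h : ∀ e ∈ s, ¬ e.IsDiag) :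
    (fromEdgeSet (s : Set (Sym2 V))).IsTree ↔
      (fromEdgeSet (s : Set (Sym2 V))).Connected ∧ #s + 1 = Nat.card V := by
  rw [isTree_iff_connected_and_card, edgeSet_fromEdgeSet_of_forall_not_isDiag h,
    Nat.card_coe_set_eq, Set.ncard_coe_finset]

lemma Reachable.map_of_adj_imp {G : SimpleGraph V} {H : SimpleGraph W} {q : V → W}
    (h : ∀ x y, G.Adj x y → q x = q y ∨ H.Adj (q x) (q y)) {x y : V} (hxy : G.Reachable x y) :
    H.Reachable (q x) (q y) := by
  rw [reachable_iff_reflTransGen] at hxy ⊢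
  refine hxy.lift' q fun a b hab => ?_
  show Relation.ReflTransGen H.Adj (q a) (q b)
  rcases h a b hab with heq | hadj
  · rw [heq]
  · exact .single hadj

lemma Connected.of_surjective_of_adj_imp {G : SimpleGraph V} {H : SimpleGraph W} {q : V → W}
    (hq : Surjective q) (h : ∀ x y, G.Adj x y → q x = q y ∨ H.Adj (q x) (q y))
    (hG : G.Connected) : H.Connected := by
  have := hG.nonempty.map q
  refine Connected.mk fun c d => ?_
  obtain ⟨x, rfl⟩ := hq c
  obtain ⟨y, rfl⟩ := hq d
  exact (hG.preconnected x y).map_of_adj_imp h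

lemma Connected.of_reachable_fibers [Nonempty V] {G : SimpleGraph V} {H : SimpleGraph W}
    {q : V → W} (hfib : ∀ x y, q x = q y → G.Reachable x y)
    (hlift : ∀ c d, H.Adj c d → ∃ x y, G.Adj x y ∧ q x = c ∧ q y = d)
    (hH : H.Preconnected) : G.Connected := by
  refine Connected.mk fun x y => ?_
  suffices ∀ c, H.Reachable (q x) c → ∀ y, q y = c → G.Reachable x y from
    this _ (hH (q x) (q y)) y rfl
  intro c hc
  rw [reachable_iff_reflTransGen] at hc
  induction hc with
  | refl => exact fun y hy => hfib x y hy.symm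
  | tail _ hbc ih =>
    intro y hy
    obtain ⟨x', y', hadj, rfl, rfl⟩ := hlift _ _ hbc
    exact (ih x' rfl).trans (hadj.reachable.trans (hfib y' y hy.symm))

lemma fromEdgeSet_coe_eq_iff {s : Finset (Sym2 V)} (h : ∀ e ∈ s, ¬ e.IsDiag)
    {T : SimpleGraph V} [Fintype T.edgeSet] :
    fromEdgeSet (s : Set (Sym2 V)) = T ↔ s = T.edgeFinset := by
  rw [← Finset.coe_inj, coe_edgeFinset, eq_comm (a := (s : Set (Sym2 V))), edgeSet_eq_iff,
    Set.disjoint_left]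
  exact ⟨fun hT => ⟨hT.symm, h⟩, fun hT => hT.1.symm⟩

open Classical in
theorem sum_isTree_prod_sum_fiber {α R : Type*} [Fintype V] [DecidableEq V] [DecidableEq α]
    [CommSemiring R] (π : α → Sym2 V) {E : Finset α} (hE : ∀ f ∈ E, ¬ (π f).IsDiag)
    (a : α → R) :
    ∑ T : SimpleGraph V with T.IsTree, ∏ g ∈ T.edgeFinset, ∑ f ∈ E with π f = g, a f =
      ∑ F ∈ E.powerset with
          #(F.image π) = #F ∧ (fromEdgeSet (↑(F.image π) : Set (Sym2 V))).IsTree,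
        ∏ f ∈ F, a f := by
  rw [← sum_fiberwise_of_maps_to (t := {T : SimpleGraph V | T.IsTree})
    (g := fun F : Finset α => fromEdgeSet (↑(F.image π) : Set (Sym2 V)))
    (fun F hF => by simpa using (mem_filter.mp hF).2.2)]
  refine sum_congr rfl fun T hT => ?_
  rw [prod_sum_fiber_eq_sum_transversal, filter_filter]
  refine sum_congr (filter_congr fun F hF => ?_) fun _ _ => rfl
  have hdiag : ∀ g ∈ F.image π, ¬ g.IsDiag := by
    simpa using fun f hf => hE f (mem_powerset.mp hF hf)
  rw [fromEdgeSet_coe_eq_iff hdiag]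
  constructor
  · rintro ⟨hcard, himage⟩
    exact ⟨⟨by rw [himage, hcard], by simpa [himage] using (mem_filter.mp hT).2⟩, himage⟩
  · rintro ⟨⟨hcard, -⟩, himage⟩
    exact ⟨by rw [← himage, hcard], himage⟩

section Contraction

variable {q : V → W} {u v : V}

lemma isDiag_map_iff (hquv : q u = q v) (hinj : ∀ x y, q x = q y → x = y ∨ s(x, y) = s(u, v))
    (f : Sym2 V) : (Sym2.map q f).IsDiag ↔ f.IsDiag ∨ f = s(u, v) := by
  induction f using Sym2.ind with | _ x y =>
  rw [Sym2.map_mk, Sym2.mk_isDiag_iff, Sym2.mk_isDiag_iff]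
  refine ⟨hinj x y, ?_⟩
  rintro (rfl | h)
  · rfl
  · rcases Sym2.eq_iff.mp h with ⟨rfl, rfl⟩ | ⟨rfl, rfl⟩
    exacts [hquv, hquv.symm]

lemma injOn_map_edgeSet_diff (hquv : q u = q v)
    (hinj : ∀ x y, q x = q y → x = y ∨ s(x, y) = s(u, v)) {T : SimpleGraph V}
    (hT : T.IsAcyclic) (he : s(u, v) ∈ T.edgeSet) :
    Set.InjOn (Sym2.map q) (T.edgeSet \ {s(u, v)}) := by
  have no_triangle : ∀ {a b c}, T.Adj a b → T.Adj a c → T.Adj b c → False :=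
    fun hab hac hbc => by
      classical exact hT.cliqueFree le_rfl {_, _, _} (is3Clique_triple_iff.mpr ⟨hab, hac, hbc⟩)
  have q_eq_of_mem : ∀ {x x'}, s(x, x') = s(u, v) → q x = q u := fun h => by
    rcases Sym2.eq_iff.mp h with ⟨rfl, -⟩ | ⟨rfl, -⟩
    exacts [rfl, hquv.symm]
  have key : ∀ ⦃x y x' y'⦄, T.Adj x y → T.Adj x' y' → s(x, y) ≠ s(u, v) →
      q x = q x' → q y = q y' → s(x, y) = s(x', y') := by
    intro x y x' y' hxy hxy' hne hx hy
    rcases hinj x x' hx with rfl | hx' <;> rcases hinj y y' hy with rfl | hy'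
    · rfl
    · exact (no_triangle hxy hxy' (by rwa [← mem_edgeSet, hy'])).elim
    · exact (no_triangle (by rwa [← mem_edgeSet, hx']) hxy hxy').elim
    · rcases hinj x y ((q_eq_of_mem hx').trans (q_eq_of_mem hy').symm) with rfl | h
      exacts [(hxy.ne rfl).elim, (hne h).elim]
  intro f hf f' hf' heq
  induction f using Sym2.ind with | _ x y =>
  induction f' using Sym2.ind with | _ x' y' =>
  obtain ⟨hxy, hne⟩ := hf
  obtain ⟨hxy', -⟩ := hf'
  rw [Sym2.map_mk, Sym2.map_mk, Sym2.eq_iff] at heq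
  rcases heq with ⟨hx, hy⟩ | ⟨hx, hy⟩
  · exact key hxy hxy' hne hx hy
  · rw [Sym2.eq_swap (a := x')] at hxy' ⊢
    exact key hxy hxy' hne hx hy

theorem isTree_fromEdgeSet_insert_iff [Finite V] [DecidableEq V] [DecidableEq W]
    (hcard : Nat.card V = Nat.card W + 1) (huv : u ≠ v) (hq : Surjective q) (hquv : q u = q v)
    (hinj : ∀ x y, q x = q y → x = y ∨ s(x, y) = s(u, v)) {F : Finset (Sym2 V)}
    (hF : ∀ f ∈ F, ¬ (Sym2.map q f).IsDiag) :
    (fromEdgeSet (↑(insert s(u, v) F) : Set (Sym2 V))).IsTree ↔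
      #(F.image (Sym2.map q)) = #F ∧
        (fromEdgeSet (↑(F.image (Sym2.map q)) : Set (Sym2 W))).IsTree := by
  have := Finite.of_surjective q hq
  have hdiag : ∀ e ∈ insert s(u, v) F, ¬ e.IsDiag := by
    simpa [huv] using fun f hf hd => hF f hf hd.map
  have hdiag' : ∀ g ∈ F.image (Sym2.map q), ¬ g.IsDiag := by simpa using hF
  have he : s(u, v) ∉ F := fun h => hF _ h (Sym2.mk_isDiag_iff.mpr hquv)
  set T := fromEdgeSet (↑(insert s(u, v) F) : Set (Sym2 V))
  set T' := fromEdgeSet (↑(F.image (Sym2.map q)) : Set (Sym2 W))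
  have hTadj : ∀ {x y}, s(x, y) ∈ insert s(u, v) F → T.Adj x y := fun h =>
    (fromEdgeSet_adj _).mpr ⟨h, fun hxy => hdiag _ h (Sym2.mk_isDiag_iff.mpr hxy)⟩
  rw [isTree_fromEdgeSet_iff hdiag, isTree_fromEdgeSet_iff hdiag', card_insert_of_notMem he,
    hcard]
  constructor
  · rintro ⟨hT, hcardF⟩
    have hinjOn : Set.InjOn (Sym2.map q) F := by
      have hTedge : T.edgeSet = ↑(insert s(u, v) F) :=
        edgeSet_fromEdgeSet_of_forall_not_isDiag hdiag
      refine (injOn_map_edgeSet_diff (T := T) hquv hinj ?_ ?_).mono fun f hf => ?_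
      · refine ((isTree_fromEdgeSet_iff hdiag).mpr ⟨hT, ?_⟩).isAcyclic
        rw [card_insert_of_notMem he]
        omega
      · simp [hTedge]
      · rw [hTedge]
        exact ⟨mem_insert_of_mem hf, fun h => he (h ▸ hf)⟩
    rw [card_image_of_injOn hinjOn]
    refine ⟨rfl, hT.of_surjective_of_adj_imp hq (fun x y hxy => ?_), by omega⟩
    rw [fromEdgeSet_adj, coe_insert, Set.mem_insert_iff] at hxy
    rcases hxy.1 with h | h
    · exact .inl (Sym2.mk_isDiag_iff.mp ((isDiag_map_iff hquv hinj _).mpr (.inr h)))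
    · exact .inr ((fromEdgeSet_adj _).mpr ⟨mem_image_of_mem _ h, fun hq => hF _ h (by simpa)⟩)
  · rintro ⟨himage, hT', hcardF⟩
    have : Nonempty V := ⟨u⟩
    refine ⟨Connected.of_reachable_fibers (q := q) (H := T') (fun x y hxy => ?_)
      (fun c d hcd => ?_) hT'.preconnected, by omega⟩
    · rcases hinj x y hxy with rfl | h
      · rfl
      · exact (hTadj (h ▸ mem_insert_self _ _)).reachable
    · obtain ⟨f, hf, hfcd⟩ := mem_image.mp ((fromEdgeSet_adj _).mp hcd).1
      induction f using Sym2.ind with | _ x y =>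
      have hxy : T.Adj x y := hTadj (mem_insert_of_mem hf)
      rw [Sym2.map_mk, Sym2.eq_iff] at hfcd
      rcases hfcd with ⟨rfl, rfl⟩ | ⟨rfl, rfl⟩
      exacts [⟨x, y, hxy, rfl, rfl⟩, ⟨y, x, hxy.symm, rfl, rfl⟩]

open Classical in
theorem sum_isTree_fromEdgeSet_insert_eq {R : Type*} [Fintype V] [DecidableEq V]
    [DecidableEq W] [AddCommMonoid R] (huv : u ≠ v) (hquv : q u = q v)
    (hinj : ∀ x y, q x = q y → x = y ∨ s(x, y) = s(u, v)) (φ : Finset (Sym2 V) → R) :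
    ∑ F ∈ ({f | ¬ (Sym2.map q f).IsDiag} : Finset (Sym2 V)).powerset with
        (fromEdgeSet ((insert s(u, v) F : Finset (Sym2 V)) : Set (Sym2 V))).IsTree, φ F =
      ∑ T : SimpleGraph V with T.IsTree ∧ s(u, v) ∈ T.edgeSet,
        φ (T.edgeFinset.erase s(u, v)) := by
  have edgeFinset_eq : ∀ {F : Finset (Sym2 V)} {T : SimpleGraph V} {_ : Fintype T.edgeSet},
      (∀ f ∈ F, ¬ (Sym2.map q f).IsDiag) → fromEdgeSet ↑(insert s(u, v) F) = T →
        T.edgeFinset = insert s(u, v) F :=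
    fun hF hT => ((fromEdgeSet_coe_eq_iff (by simpa [huv] using fun f hf hd => hF f hf hd.map)).mp
      hT).symm
  have fromEdgeSet_eq : ∀ {T : SimpleGraph V}, s(u, v) ∈ T.edgeSet →
      fromEdgeSet (↑(insert s(u, v) (T.edgeFinset.erase s(u, v))) : Set (Sym2 V)) = T := by
    intro T he
    rw [insert_erase (mem_edgeFinset.mpr he), coe_edgeFinset, fromEdgeSet_edgeSet]
  have he : ∀ {F : Finset (Sym2 V)}, (∀ f ∈ F, ¬ (Sym2.map q f).IsDiag) → s(u, v) ∉ F :=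
    fun hF h => hF _ h (Sym2.mk_isDiag_iff.mpr hquv)
  have mem_powerset_iff : ∀ {F : Finset (Sym2 V)},
      F ∈ ({f | ¬ (Sym2.map q f).IsDiag} : Finset (Sym2 V)).powerset ↔
        ∀ f ∈ F, ¬ (Sym2.map q f).IsDiag := by
    simp [subset_iff]
  refine sum_nbij' (fun F => fromEdgeSet (↑(insert s(u, v) F) : Set (Sym2 V)))
    (fun T => T.edgeFinset.erase s(u, v)) (fun F hF => ?_) (fun T hT => ?_) (fun F hF => ?_)
    (fun T hT => ?_) (fun F hF => ?_)
  · rw [mem_filter, mem_powerset_iff] at hF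
    rw [mem_filter, ← mem_edgeFinset, edgeFinset_eq hF.1 rfl]
    exact ⟨mem_univ _, hF.2, mem_insert_self _ _⟩
  · rw [mem_filter] at hT
    rw [mem_filter, mem_powerset_iff, fromEdgeSet_eq hT.2.2]
    refine ⟨fun f hf => ?_, hT.2.1⟩
    rw [isDiag_map_iff hquv hinj, not_or]
    exact ⟨T.not_isDiag_of_mem_edgeSet (mem_edgeFinset.mp (mem_of_mem_erase hf)),
      ne_of_mem_erase hf⟩
  · rw [mem_filter, mem_powerset_iff] at hF
    rw [edgeFinset_eq hF.1 rfl, erase_insert (he hF.1)]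
  · exact fromEdgeSet_eq (mem_filter.mp hT).2.2
  · rw [mem_filter, mem_powerset_iff] at hF
    rw [edgeFinset_eq hF.1 rfl, erase_insert (he hF.1)]

end Contraction

end SimpleGraph

lemma treeProd_eq_prod_edgeFinset {n : ℕ} {A : Type*} [CommRing A] (T : SimpleGraph (Fin n))
    [Fintype T.edgeSet] (a : Sym2 (Fin n) → A) : treeProd T a = ∏ f ∈ T.edgeFinset, a f := by
  rw [treeProd, ← SimpleGraph.coe_edgeFinset, finprod_mem_coe_finset]

lemma treeProd_add_edgeIndicator_sub_treeProd {n : ℕ} {A : Type*} [CommRing A]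
    {T : SimpleGraph (Fin n)} [Fintype T.edgeSet] {e : Sym2 (Fin n)} (he : e ∈ T.edgeSet)
    (a : Sym2 (Fin n) → A) :
    treeProd T (a + edgeIndicator e) - treeProd T a = ∏ f ∈ T.edgeFinset.erase e, a f := by
  have he' : e ∈ T.edgeFinset := SimpleGraph.mem_edgeFinset.mpr he
  have hrest : ∏ f ∈ T.edgeFinset.erase e, (a + edgeIndicator e : Sym2 (Fin n) → A) f =
      ∏ f ∈ T.edgeFinset.erase e, a f :=
    prod_congr rfl fun f hf => by simp [edgeIndicator, ne_of_mem_erase hf]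
  rw [treeProd_eq_prod_edgeFinset, treeProd_eq_prod_edgeFinset, ← mul_prod_erase _ _ he',
    ← mul_prod_erase _ _ he', hrest]
  simp [edgeIndicator, add_mul]

open Classical in
lemma forestedForm_pushforward_eq_sum_prod {n : ℕ} {A : Type*} [CommRing A] {u v : Fin (n + 1)}
    {q : Fin (n + 1) → Fin n} (hquv : q u = q v) (a : Sym2 (Fin (n + 1)) → A) :
    forestedForm n (pushforward q s(u, v) a) =
      ∑ T : SimpleGraph (Fin n) with T.IsTree, ∏ g ∈ T.edgeFinset,
        ∑ f ∈ ({f | ¬ (Sym2.map q f).IsDiag} : Finset _) with Sym2.map q f = g, a f := by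
  rw [forestedForm, finsum_cond_eq_sum_of_cond_iff _
    (t := ({T | T.IsTree} : Finset (SimpleGraph (Fin n)))) (by simp)]
  refine sum_congr rfl fun T _ => ?_
  rw [treeProd_eq_prod_edgeFinset]
  refine prod_congr rfl fun g hg => ?_
  rw [pushforward, ← finsum_mem_coe_finset]
  refine finsum_mem_congr (Set.ext fun f => ?_) fun _ _ => rfl
  simp only [filter_filter, coe_filter, mem_univ, true_and, Set.mem_ofPred_eq]
  constructor
  · rintro ⟨-, -, rfl⟩
    exact ⟨T.not_isDiag_of_mem_edgeSet (SimpleGraph.mem_edgeFinset.mp hg), rfl⟩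
  · rintro ⟨hf, rfl⟩
    refine ⟨fun hd => hf hd.map, fun h => hf ?_, rfl⟩
    rw [h, Sym2.map_mk, Sym2.mk_isDiag_iff, hquv]

theorem forestedForm_pushforward_eq_sum_over_trees_containing_edge_general {A : Type*} [CommRing A]
    (n : ℕ)
    (u v : Fin (n + 1)) (huv : u ≠ v)
    (q : Fin (n + 1) → Fin n) (hq : Function.Surjective q) (hquv : q u = q v)
    (hinj : ∀ x y : Fin (n + 1), q x = q y → x = y ∨ s(x, y) = s(u, v))
    (a : Sym2 (Fin (n + 1)) → A) :
    forestedForm n (pushforward q s(u, v) a) =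
      ∑ᶠ T ∈ {T : SimpleGraph (Fin (n + 1)) | T.IsTree ∧ s(u, v) ∈ T.edgeSet},
        (treeProd T (a + edgeIndicator s(u, v)) - treeProd T a) := by
  classical
  set E : Finset (Sym2 (Fin (n + 1))) := {f | ¬ (Sym2.map q f).IsDiag}
  have hE : ∀ F ∈ E.powerset, ∀ f ∈ F, ¬ (Sym2.map q f).IsDiag := fun F hF f hf => by
    simpa [E] using mem_powerset.mp hF hf
  calc forestedForm n (pushforward q s(u, v) a)
      = ∑ F ∈ E.powerset with #(F.image (Sym2.map q)) = #F ∧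
          (SimpleGraph.fromEdgeSet (↑(F.image (Sym2.map q)) : Set (Sym2 (Fin n)))).IsTree,
          ∏ f ∈ F, a f := by
        rw [forestedForm_pushforward_eq_sum_prod hquv,
          SimpleGraph.sum_isTree_prod_sum_fiber _ (by simp)]
    _ = ∑ F ∈ E.powerset with
          (SimpleGraph.fromEdgeSet
            ((insert s(u, v) F : Finset _) : Set (Sym2 (Fin (n + 1))))).IsTree,
          ∏ f ∈ F, a f :=
        sum_congr (filter_congr fun F hF => (SimpleGraph.isTree_fromEdgeSet_insert_iff
          (by simp) huv hq hquv hinj (hE F hF)).symm) fun _ _ => rfl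
    _ = ∑ T : SimpleGraph (Fin (n + 1)) with T.IsTree ∧ s(u, v) ∈ T.edgeSet,
          ∏ f ∈ T.edgeFinset.erase s(u, v), a f :=
        SimpleGraph.sum_isTree_fromEdgeSet_insert_eq huv hquv hinj fun F => ∏ f ∈ F, a f
    _ = _ := by
        rw [finsum_cond_eq_sum_of_cond_iff _ (t := ({T | T.IsTree ∧ s(u, v) ∈ T.edgeSet} :
          Finset (SimpleGraph (Fin (n + 1))))) (by simp)]
        exact sum_congr rfl fun T hT =>
          (treeProd_add_edgeIndicator_sub_treeProd (mem_filter.mp hT).2.2 a).symm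

/-- `Φ_n((c_{e₀})_* a) = Σ_{T ∈ T_{n+1}^{e₀}} ( T_*(a + 1_{e₀}) − T_*(a) )`,
where `T_{n+1}^{e₀}` is the set of spanning trees of `K_{n+1}` containing `e₀ = s(u,v)`. -/
theorem forestedForm_pushforward_eq_sum_over_trees_containing_edge {A : Type*} [CommRing A]
    (n : ℕ) (hn : 1 ≤ n)
    (u v : Fin (n + 1)) (huv : u ≠ v)
    (q : Fin (n + 1) → Fin n) (hq : Function.Surjective q) (hquv : q u = q v)
    (hinj : ∀ x y : Fin (n + 1), q x = q y → x = y ∨ s(x, y) = s(u, v))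
    (a : Sym2 (Fin (n + 1)) → A) :
    forestedForm n (pushforward q s(u, v) a) =
      ∑ᶠ T ∈ {T : SimpleGraph (Fin (n + 1)) | T.IsTree ∧ s(u, v) ∈ T.edgeSet},
        (treeProd T (a + edgeIndicator s(u, v)) - treeProd T a) :=
  forestedForm_pushforward_eq_sum_over_trees_containing_edge_general n u v huv q hq hquv hinj a
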